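/- Let G be a minimally nonperfectly divisible graph. Then every vertex v of G satisfies |N(v)| ≥ ω(G) + 1. -/

import Mathlib

open SimpleGraph

variable {V : Type}

/-- The clique number of the subgraph of `G` induced on `S`. -/
noncomputable def omegaOn (G : SimpleGraph V) (S : Set V) : ℕ :=
  sSup {n | ∃ s : Finset V, ↑s ⊆ S ∧ G.IsNClique n s}

/-- The subgraph of `G` induced on `S` is a perfect graph. -/
def IsPerfectOn (G : SimpleGraph V) (S : Set V) : Prop :=
  ∀ T : Set V, T ⊆ S → (G.induce T).chromaticNumber = (omegaOn G T : ℕ∞)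

/-- Every nonempty induced subgraph of `G[S]` admits a perfect division. -/
def PerfDivOn (G : SimpleGraph V) (S : Set V) : Prop :=
  ∀ H : Set V, H ⊆ S → H.Nonempty →
    ∃ A B : Set V, A ∪ B = H ∧ Disjoint A B ∧
      IsPerfectOn G A ∧ omegaOn G B < omegaOn G H

/-- `G` is minimally nonperfectly divisible. -/
def MNPD (G : SimpleGraph V) : Prop :=
  ¬ PerfDivOn G Set.univ ∧ ∀ S : Set V, S ≠ Set.univ → PerfDivOn G S

/-- The external neighbourhood `N(X)`. -/
def extNbhd (G : SimpleGraph V) (X : Set V) : Set V :=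
  {v | v ∉ X ∧ ∃ x ∈ X, G.Adj v x}

/-
Suppose some vertex `v` has at most `ω(G)` neighbours. By minimality, `G - v` has a perfect
division `(A, B)`, and `ω(B) < ω(G)`. If `ω(B + v) < ω(G)`, then `(A, B + v)` divides `G`.
Otherwise a maximum clique of `G` lies in `B + v` and contains `v`, so `ω(G) - 1` neighbours of `v`
lie in `B` and at most one lies in `A`. A vertex with at most one neighbour can be added to a
perfect graph, colouring it greedily, so `(A + v, B)` divides `G`, contradicting that `G` is not
perfectly divisible.
-/

lemma omegaOn_empty (G : SimpleGraph V) : omegaOn G ∅ = 0 := by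
  have h : {n | ∃ s : Finset V, ↑s ⊆ (∅ : Set V) ∧ G.IsNClique n s} = {0} := by
    ext n
    simp [Set.subset_empty_iff, isNClique_iff]
  rw [omegaOn, h, csSup_singleton]

lemma isPerfectOn_empty (G : SimpleGraph V) : IsPerfectOn G ∅ := by
  intro T hT
  obtain rfl := Set.subset_empty_iff.mp hT
  simp [omegaOn_empty]

section

variable [Finite V] {G : SimpleGraph V}

lemma bddAbove_cliqueSizes (G : SimpleGraph V) (S : Set V) :
    BddAbove {n | ∃ s : Finset V, ↑s ⊆ S ∧ G.IsNClique n s} := by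
  refine ⟨S.ncard, ?_⟩
  rintro n ⟨s, hsS, hs⟩
  rw [← hs.card_eq, ← Set.ncard_coe_finset]
  exact Set.ncard_le_ncard hsS

lemma SimpleGraph.IsNClique.le_omegaOn {S : Set V} {n : ℕ} {s : Finset V}
    (hs : G.IsNClique n s) (hsS : ↑s ⊆ S) : n ≤ omegaOn G S :=
  le_csSup (bddAbove_cliqueSizes G S) ⟨s, hsS, hs⟩

lemma exists_isNClique_omegaOn (G : SimpleGraph V) (S : Set V) :
    ∃ s : Finset V, ↑s ⊆ S ∧ G.IsNClique (omegaOn G S) s := by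
  refine Nat.sSup_mem ?_ (bddAbove_cliqueSizes G S)
  exact ⟨0, ∅, by simp, by simp⟩

lemma omegaOn_mono {S T : Set V} (h : S ⊆ T) : omegaOn G S ≤ omegaOn G T := by
  obtain ⟨s, hsS, hs⟩ := exists_isNClique_omegaOn G S
  exact hs.le_omegaOn (hsS.trans h)

lemma one_le_omegaOn {S : Set V} {v : V} (hv : v ∈ S) : 1 ≤ omegaOn G S :=
  (isNClique_singleton.mpr rfl).le_omegaOn (s := {v}) (by simpa using hv)

lemma two_le_omegaOn {S : Set V} {u v : V} (hu : u ∈ S) (hv : v ∈ S) (huv : G.Adj u v) :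
    2 ≤ omegaOn G S := by
  classical
  have hpair : G.IsNClique 2 {u, v} :=
    ⟨by simpa using isClique_pair.mpr fun _ => huv, Finset.card_pair huv.ne⟩
  exact hpair.le_omegaOn (by simp [Set.insert_subset_iff, hu, hv])

lemma omegaOn_le_chromaticNumber (G : SimpleGraph V) (T : Set V) :
    (omegaOn G T : ℕ∞) ≤ (G.induce T).chromaticNumber := by
  classical
  obtain ⟨s, hsT, hs⟩ := exists_isNClique_omegaOn G T
  have hclique : (G.induce T).IsClique (s.subtype (· ∈ T) : Set T) :=
    fun x hx y hy hxy => hs.isClique (Finset.mem_subtype.mp hx) (Finset.mem_subtype.mp hy)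
      (Subtype.coe_injective.ne hxy)
  have hcard : (s.subtype (· ∈ T)).card = omegaOn G T := by
    rw [Finset.card_subtype, Finset.filter_true_of_mem fun x hx => hsT hx, hs.card_eq]
  simpa [hcard] using hclique.card_le_chromaticNumber

lemma SimpleGraph.Colorable.induce_of_diff_singleton {T : Set V} {v : V} {n : ℕ}
    (hc : (G.induce (T \ {v})).Colorable n) (hdeg : (T ∩ G.neighborSet v).ncard < n) :
    (G.induce T).Colorable n := by
  classical
  obtain ⟨c⟩ := hc
  let col : V → Fin n := fun x => if h : x ∈ T \ {v} then c ⟨x, h⟩ else ⟨0, by omega⟩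
  obtain ⟨d, hd⟩ : ∃ d, d ∉ col '' (T ∩ G.neighborSet v) := by
    by_contra! h
    have := Set.ncard_image_le (f := col) (s := T ∩ G.neighborSet v)
    rw [Set.eq_univ_of_forall h, Set.ncard_univ, Nat.card_eq_fintype_card, Fintype.card_fin] at this
    omega
  have hvd : ∀ y (hy : y ∈ T \ {v}), G.Adj v y → c ⟨y, hy⟩ ≠ d := fun y hy hvy hcy =>
    hd ⟨y, ⟨hy.1, hvy⟩, by simp only [col, dif_pos hy, hcy]⟩
  refine ⟨Coloring.mk (fun x => if h : x.1 = v then d else c ⟨x, x.2, h⟩) ?_⟩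
  rintro ⟨x, hx⟩ ⟨y, hy⟩ (hxy : G.Adj x y)
  by_cases hxv : x = v <;> by_cases hyv : y = v <;> simp only [dif_pos, hxv, hyv]
  · exact absurd (hxv.trans hyv.symm) hxy.ne
  · exact (hvd y ⟨hy, hyv⟩ (hxv ▸ hxy)).symm
  · exact hvd x ⟨hx, hxv⟩ (hyv ▸ hxy.symm)
  · exact c.valid (show G.Adj x y from hxy)

lemma IsPerfectOn.insert {A : Set V} {v : V} (hA : IsPerfectOn G A)
    (hN : (A ∩ G.neighborSet v).Subsingleton) : IsPerfectOn G (insert v A) := by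
  intro T hT
  by_cases hvT : v ∈ T
  swap
  · exact hA T fun x hx => (hT hx).resolve_left (ne_of_mem_of_not_mem hx hvT)
  have hTA : T \ {v} ⊆ A := fun x hx => (hT hx.1).resolve_left hx.2
  have hcol : (G.induce (T \ {v})).Colorable (omegaOn G T) := by
    rw [← chromaticNumber_le_iff_colorable, hA _ hTA]
    exact_mod_cast omegaOn_mono Set.sdiff_subset
  have hdeg : (T ∩ G.neighborSet v).ncard < omegaOn G T := by
    have hsub : T ∩ G.neighborSet v ⊆ A ∩ G.neighborSet v :=
      fun x hx => ⟨hTA ⟨hx.1, (G.ne_of_adj hx.2).symm⟩, hx.2⟩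
    rcases (hN.anti hsub).eq_empty_or_singleton with h | ⟨u, hu⟩
    · rw [h, Set.ncard_empty]
      exact one_le_omegaOn hvT
    · have hu' : u ∈ T ∩ G.neighborSet v := hu ▸ rfl
      rw [hu, Set.ncard_singleton]
      exact two_le_omegaOn hvT hu'.1 hu'.2
  exact le_antisymm (hcol.induce_of_diff_singleton hdeg).chromaticNumber_le
    (omegaOn_le_chromaticNumber G T)

lemma SimpleGraph.IsNClique.inter_neighborSet_subsingleton {K : Finset V} {n : ℕ} {v : V}
    {H A : Set V} (hK : G.IsNClique n K) (hvK : v ∈ K) (hKH : ↑K ⊆ H) (hAH : A ⊆ H)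
    (hAK : Disjoint A ↑K) (hdeg : (H ∩ G.neighborSet v).ncard ≤ n) :
    (A ∩ G.neighborSet v).Subsingleton := by
  classical
  have hKv : ↑(K.erase v) ⊆ H ∩ G.neighborSet v := fun x hx =>
    have hx' := Finset.mem_erase.mp hx
    ⟨hKH hx'.2, hK.isClique hvK hx'.2 (Ne.symm hx'.1)⟩
  have hdisj : Disjoint (A ∩ G.neighborSet v) ↑(K.erase v) :=
    hAK.mono Set.inter_subset_left (Finset.coe_subset.mpr (K.erase_subset v))
  have hcard := Set.ncard_le_ncard (Set.union_subset (Set.inter_subset_inter_left _ hAH) hKv)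
  rw [Set.ncard_union_eq hdisj, Set.ncard_coe_finset, Finset.card_erase_of_mem hvK,
    hK.card_eq] at hcard
  have hn : 1 ≤ n := hK.card_eq ▸ Finset.card_pos.mpr ⟨v, hvK⟩
  exact Set.ncard_le_one_iff_subsingleton.mp (by omega)

lemma PerfDivOn.exists_split_diff_singleton {H : Set V} {v : V} (hv : v ∈ H)
    (hH : PerfDivOn G (H \ {v})) :
    ∃ A B : Set V, A ∪ B = H \ {v} ∧ Disjoint A B ∧
      IsPerfectOn G A ∧ omegaOn G B < omegaOn G H := by
  rcases (H \ {v}).eq_empty_or_nonempty with h | h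
  · refine ⟨∅, ∅, by simp [h], by simp, isPerfectOn_empty G, ?_⟩
    rw [omegaOn_empty]
    exact one_le_omegaOn hv
  · obtain ⟨A, B, hAB, hdisj, hA, hB⟩ := hH _ subset_rfl h
    exact ⟨A, B, hAB, hdisj, hA, hB.trans_le (omegaOn_mono Set.sdiff_subset)⟩

lemma exists_perfect_division_of_ncard_neighborSet_le {H A B : Set V} {v : V} (hv : v ∈ H)
    (hdeg : (H ∩ G.neighborSet v).ncard ≤ omegaOn G H)
    (hAB : A ∪ B = H \ {v}) (hdisj : Disjoint A B) (hA : IsPerfectOn G A)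
    (hB : omegaOn G B < omegaOn G H) :
    ∃ A' B' : Set V, A' ∪ B' = H ∧ Disjoint A' B' ∧
      IsPerfectOn G A' ∧ omegaOn G B' < omegaOn G H := by
  have hvA : v ∉ A := fun h => (hAB ▸ Set.mem_union_left B h : v ∈ H \ {v}).2 rfl
  have hvB : v ∉ B := fun h => (hAB ▸ Set.mem_union_right A h : v ∈ H \ {v}).2 rfl
  have hinsert : insert v (A ∪ B) = H := by
    rw [hAB, Set.insert_sdiff_singleton, Set.insert_eq_of_mem hv]
  by_cases hBv : omegaOn G (insert v B) < omegaOn G H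
  · exact ⟨A, insert v B, by rw [Set.union_insert, hinsert],
      Set.disjoint_insert_right.mpr ⟨hvA, hdisj⟩, hA, hBv⟩
  have hBH : insert v B ⊆ H := hinsert ▸ Set.insert_subset_insert Set.subset_union_right
  obtain ⟨K, hKB, hK⟩ := exists_isNClique_omegaOn G (insert v B)
  rw [le_antisymm (omegaOn_mono hBH) (not_lt.mp hBv)] at hK
  have hvK : v ∈ K := by
    by_contra hvK
    exact (hK.le_omegaOn fun x hx => (hKB hx).resolve_left
      (ne_of_mem_of_not_mem hx (Finset.mem_coe.not.mpr hvK))).not_gt hB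
  have hAK : Disjoint A ↑K :=
    Set.disjoint_of_subset_right hKB (Set.disjoint_insert_right.mpr ⟨hvA, hdisj⟩)
  have hAH : A ⊆ H := hinsert ▸ Set.subset_union_left.trans (Set.subset_insert _ _)
  exact ⟨insert v A, B, by rw [Set.insert_union, hinsert],
    Set.disjoint_insert_left.mpr ⟨hvB, hdisj⟩,
    hA.insert (hK.inter_neighborSet_subsingleton hvK (hKB.trans hBH) hAH hAK hdeg), hB⟩

end

theorem stmt_9 [Fintype V] (G : SimpleGraph V) (hG : MNPD G) :
    ∀ v : V, omegaOn G Set.univ + 1 ≤ (G.neighborSet v).ncard := by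
  intro v
  by_contra! hdeg
  refine hG.1 fun H _ hH => ?_
  rcases eq_or_ne H Set.univ with rfl | hH'
  · have hdeg' : (Set.univ ∩ G.neighborSet v).ncard ≤ omegaOn G Set.univ := by
      rw [Set.univ_inter]
      omega
    have hv : Set.univ \ {v} ≠ Set.univ := by simp
    obtain ⟨A, B, hAB, hdisj, hA, hB⟩ :=
      PerfDivOn.exists_split_diff_singleton (Set.mem_univ v) (hG.2 (Set.univ \ {v}) hv)
    exact exists_perfect_division_of_ncard_neighborSet_le (Set.mem_univ v) hdeg' hAB hdisj hA hB
  · exact hG.2 H hH' H subset_rfl hH
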